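/- arXiv:1010.2118 — 6 statements merged into one kernel-verified Lean document; each statement's English description precedes it below -/
import Mathlib

section
/- Let a_1,...,a_m be vectors in Z^n such that the origin lies in the interior of their convex hull in R^n. Then there exists a relation l = (l_1,...,l_m) in Z^m with all l_i > 0 and sum_i l_i * a_i = 0. -/
/-!
Since `0` is interior to the hull, `-δ • ∑ aᵢ` is a convex combination `∑ wᵢ aᵢ` for some small
`δ > 0`, so `tᵢ = wᵢ + δ` is a strictly positive real relation. The relations form the left kernel
of the rational matrix `M` with rows `aᵢ`; if `M G M = M`, then `x ↦ x (1 - M G)` is a rational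
matrix projecting onto that kernel over `ℝ` as well as over `ℚ`. Applied to a rational vector close
to `t` it yields a strictly positive rational relation, and clearing denominators an integral one.
-/

open Set Filter Topology Matrix

theorem exists_pos_sum_smul_eq_zero_of_zero_mem_interior_convexHull {ι E : Type*} [Fintype ι]
    [AddCommGroup E] [Module ℝ E] [TopologicalSpace E] [ContinuousSMul ℝ E] {v : ι → E}
    (h : 0 ∈ interior (convexHull ℝ (range v))) :
    ∃ t : ι → ℝ, (∀ i, 0 < t i) ∧ ∑ i, t i • v i = 0 := by
  classical
  set s := ∑ i, v i
  have hlim : Tendsto (fun δ : ℝ => -δ • s) (𝓝[>] 0) (𝓝 0) := by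
    have : Continuous fun δ : ℝ => -δ • s := by fun_prop
    exact (this.tendsto' 0 0 (by simp)).mono_left nhdsWithin_le_nhds
  obtain ⟨δ, hδ, hδpos⟩ :=
    ((hlim.eventually (mem_interior_iff_mem_nhds.mp h)).and self_mem_nhdsWithin).exists
  rw [convexHull_range_eq_exists_affineCombination] at hδ
  obtain ⟨F, w, hw0, hw1, hw⟩ := hδ
  rw [Finset.affineCombination_eq_linear_combination F v w hw1] at hw
  refine ⟨fun i => (if i ∈ F then w i else 0) + δ, fun i => ?_, ?_⟩
  · have : 0 ≤ if i ∈ F then w i else 0 := by split_ifs with hi; exacts [hw0 i hi, le_rfl]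
    exact add_pos_of_nonneg_of_pos this hδpos
  · simp [add_smul, Finset.sum_add_distrib, ite_smul, ← Finset.smul_sum, hw, s]

theorem LinearMap.exists_comp_comp_eq_self {K V W : Type*} [DivisionRing K]
    [AddCommGroup V] [Module K V] [AddCommGroup W] [Module K W] (f : V →ₗ[K] W) :
    ∃ g : W →ₗ[K] V, f ∘ₗ g ∘ₗ f = f := by
  obtain ⟨s, hs⟩ := f.rangeRestrict.exists_rightInverse_of_surjective f.range_rangeRestrict
  obtain ⟨g, hg⟩ := s.exists_extend
  refine ⟨g, LinearMap.ext fun x => ?_⟩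
  have hgx : g (f x) = s (f.rangeRestrict x) := congr($hg (f.rangeRestrict x))
  have hsx : f.rangeRestrict (s (f.rangeRestrict x)) = f.rangeRestrict x :=
    congr($hs (f.rangeRestrict x))
  simpa [hgx] using congr(Subtype.val $hsx)

theorem Matrix.exists_mul_mul_eq_self {K m n : Type*} [Field K] [Fintype m] [Fintype n]
    (M : Matrix m n K) : ∃ G : Matrix n m K, M * G * M = M := by
  classical
  obtain ⟨g, hg⟩ := (Matrix.toLin' M).exists_comp_comp_eq_self
  refine ⟨LinearMap.toMatrix' g, Matrix.toLin'.injective ?_⟩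
  simpa [Matrix.toLin'_mul, LinearMap.comp_assoc] using hg

theorem exists_pos_rat_vecMul_eq_zero {ι κ : Type*} [Fintype ι] [Fintype κ] (M : Matrix ι κ ℚ)
    {t : ι → ℝ} (ht : ∀ i, 0 < t i) (htM : t ᵥ* M.map (↑) = 0) :
    ∃ q : ι → ℚ, (∀ i, 0 < q i) ∧ q ᵥ* M = 0 := by
  classical
  obtain ⟨G, hG⟩ := M.exists_mul_mul_eq_self
  set Q := 1 - M * G
  have hQM : Q * M = 0 := by rw [Matrix.sub_mul, Matrix.one_mul, hG, sub_self]
  have hQ : Q.map ((↑) : ℚ → ℝ) =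
      1 - (M.map ((↑) : ℚ → ℝ) * G.map ((↑) : ℚ → ℝ) : Matrix ι ι ℝ) := by
    rw [Matrix.map_sub _ Rat.cast_sub, Matrix.map_one _ Rat.cast_zero Rat.cast_one,
      ← Rat.coe_castHom, Matrix.map_mul]
  have htQ : t ᵥ* Q.map (↑) = t := by
    rw [hQ, vecMul_sub, ← vecMul_vecMul, htM]
    simp
  have hU : IsOpen {x : ι → ℝ | ∀ i, 0 < (x ᵥ* Q.map (↑)) i} := by
    simp only [ofPred_forall]
    exact isOpen_iInter_of_finite fun i => isOpen_lt continuous_const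
      ((continuous_apply i).comp (continuous_id.matrix_vecMul continuous_const))
  obtain ⟨r, hr⟩ := (DenseRange.piMap fun _ => Rat.denseRange_cast).exists_mem_open hU
    ⟨t, by simpa [htQ] using ht⟩
  refine ⟨r ᵥ* Q, fun i => ?_, by rw [vecMul_vecMul, hQM, vecMul_zero]⟩
  have hcast := RingHom.map_vecMul (Rat.castHom ℝ) Q r i
  rw [Rat.coe_castHom] at hcast
  have : (0 : ℝ) < (r ᵥ* Q) i := hcast ▸ hr i
  exact_mod_cast this

theorem exists_pos_nat_mul_eq_int {ι : Type*} [Fintype ι] (q : ι → ℚ) :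
    ∃ d : ℕ, 0 < d ∧ ∀ i, ∃ z : ℤ, (z : ℚ) = d * q i := by
  refine ⟨∏ i, (q i).den, Finset.prod_pos fun i _ => (q i).pos, fun i => ?_⟩
  obtain ⟨c, hc⟩ : (q i).den ∣ ∏ i, (q i).den := Finset.dvd_prod_of_mem _ (Finset.mem_univ i)
  refine ⟨(q i).num * c, ?_⟩
  rw [hc]
  push_cast
  rw [← Rat.mul_den_eq_num]
  ring

theorem exists_pos_int_vecMul_eq_zero {ι κ : Type*} [Fintype ι] (M : Matrix ι κ ℤ)
    {q : ι → ℚ} (hq : ∀ i, 0 < q i) (hqM : q ᵥ* M.map (↑) = 0) :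
    ∃ l : ι → ℤ, (∀ i, 0 < l i) ∧ l ᵥ* M = 0 := by
  obtain ⟨d, hd, hz⟩ := exists_pos_nat_mul_eq_int q
  choose l hl using hz
  refine ⟨l, fun i => ?_, ?_⟩
  · have : (0 : ℚ) < l i := hl i ▸ mul_pos (by exact_mod_cast hd) (hq i)
    exact_mod_cast this
  · have h : (fun i => (l i : ℚ)) ᵥ* M.map (↑) = 0 := by
      rw [show (fun i => (l i : ℚ)) = (d : ℚ) • q by ext i; simp [hl], smul_vecMul, hqM,
        smul_zero]
    funext j
    have := RingHom.map_vecMul (Int.castRingHom ℚ) M l j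
    simp only [Int.coe_castRingHom, Function.comp_def, h, Pi.zero_apply] at this
    exact_mod_cast this

/-- If the origin lies in the interior of the convex hull of the lattice vectors
`a 1, ..., a m` in `ℝ^n`, then there is a strictly positive integral relation among them. -/
theorem stmt0 (n m : ℕ) (a : Fin m → Fin n → ℤ)
    (h0 : (0 : Fin n → ℝ) ∈
      interior (convexHull ℝ (Set.range fun i => fun k => ((a i k : ℝ))))) :
    ∃ l : Fin m → ℤ, (∀ i, 0 < l i) ∧ ∑ i, l i • a i = 0 := by
  obtain ⟨t, ht, hta⟩ := exists_pos_sum_smul_eq_zero_of_zero_mem_interior_convexHull h0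
  obtain ⟨q, hq, hqa⟩ := exists_pos_rat_vecMul_eq_zero ((Matrix.of a).map (↑)) ht <| by
    rw [Matrix.map_map, vecMul_eq_sum]
    convert hta using 3 with i
    ext k
    simp
  obtain ⟨l, hl, hla⟩ := exists_pos_int_vecMul_eq_zero (Matrix.of a) hq hqa
  exact ⟨l, hl, by rwa [vecMul_eq_sum] at hla⟩
end

section
/- Let a_1,...,a_m in Z^n and suppose there exists l in Z^m with all l_i > 0 and sum_i l_i a_i = 0. Then the monomial map k : (C*)^n -> C^m given by k(y) = (y^{a_1},...,y^{a_m}) (where y^{a_i} = prod_k y_k^{a_{ki}}) is a closed embedding, i.e., the closure of the image of k in C^m is contained in (C*)^m. -/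
/-!
Raising the coordinates of a point `w = k(y)` of the image to the powers `l_i` and
multiplying gives `y ^ (∑ l_i a_i) = y ^ 0 = 1`. So the continuous function `∏ w_i ^ l_i`
is `1` on the image, hence on its closure, and no coordinate of a point where it is `1`
can vanish, since every `l_i` is positive.
-/

open Finset

theorem Finset.prod_zpow_eq_zpow_sum {G κ : Type*} [CommGroup G] (s : Finset κ) (g : G)
    (f : κ → ℤ) : ∏ j ∈ s, g ^ f j = g ^ ∑ j ∈ s, f j := by
  induction s using Finset.cons_induction with
  | empty => simp
  | cons b s _ ih => rw [prod_cons, sum_cons, zpow_add, ih]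

theorem prod_monomial_zpow_eq_one {G ι κ : Type*} [CommGroup G] [Fintype ι] [Fintype κ]
    (y : ι → G) (a : κ → ι → ℤ) (l : κ → ℤ) (hrel : ∑ j, l j • a j = 0) :
    ∏ j, (∏ k, y k ^ a j k) ^ l j = 1 := by
  have hcoord (k : ι) : ∑ j, l j * a j k = 0 := by simpa using congrFun hrel k
  calc ∏ j, (∏ k, y k ^ a j k) ^ l j
      = ∏ k, ∏ j, y k ^ (l j * a j k) := by
        simp_rw [← prod_zpow, ← zpow_mul, mul_comm]
        exact prod_comm
    _ = 1 := prod_eq_one fun k _ => by rw [prod_zpow_eq_zpow_sum, hcoord, zpow_zero]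

theorem closure_range_monomial_subset {M ι κ : Type*} [CommMonoid M] [TopologicalSpace M]
    [ContinuousMul M] [T2Space M] [Fintype ι] [Fintype κ] (a : κ → ι → ℤ) (l : κ → ℕ)
    (hrel : ∑ j, (l j : ℤ) • a j = 0) :
    closure (Set.range fun y : ι → Mˣ => fun j => ((∏ k, y k ^ a j k : Mˣ) : M))
      ⊆ {w | ∏ j, w j ^ l j = 1} := by
  refine closure_minimal ?_ (isClosed_eq (by fun_prop) continuous_const)
  rintro _ ⟨y, rfl⟩
  have h := congrArg Units.val (prod_monomial_zpow_eq_one y a (fun j => (l j : ℤ)) hrel)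
  simpa only [Set.mem_ofPred_eq, zpow_natCast, Units.coe_prod, Units.val_pow_eq_pow_val,
    Units.val_one] using h

theorem ne_zero_of_prod_pow_eq_one {M κ : Type*} [CommMonoidWithZero M] [Nontrivial M]
    [Fintype κ] {w : κ → M} {l : κ → ℕ} (h : ∏ j, w j ^ l j = 1) {i : κ} (hi : l i ≠ 0) :
    w i ≠ 0 := by
  intro hw
  refine one_ne_zero (h.symm.trans (prod_eq_zero (mem_univ i) ?_))
  rw [hw, zero_pow hi]

/-- If there is a strictly positive integral relation among `a 1, ..., a m`, then the
monomial map `k : (ℂ*)^n → ℂ^m`, `y ↦ (y^{a_1}, ..., y^{a_m})` is a closed embedding: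
the closure of its image is contained in `(ℂ*)^m`. -/
theorem stmt1 (n m : ℕ) (a : Fin m → Fin n → ℤ) (l : Fin m → ℤ)
    (hl : ∀ i, 0 < l i) (hrel : ∑ i, l i • a i = 0) :
    closure (Set.range fun y : Fin n → ℂˣ =>
        fun i : Fin m => ((∏ k, (y k) ^ (a i k) : ℂˣ) : ℂ))
      ⊆ {w : Fin m → ℂ | ∀ i, w i ≠ 0} := by
  lift l to Fin m → ℕ using fun i => (hl i).le
  intro w hw i
  exact ne_zero_of_prod_pow_eq_one (closure_range_monomial_subset a l hrel hw)
    (by simpa using (hl i).ne')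
end

section
/- Let Sigma be a complete smooth fan in R^n with primitive ray generators a_1,...,a_m such that P(Sigma) is convex. Set tilde{a}_0 = (1,0) and tilde{a}_i = (1,a_i) in Z^{n+1}, and let C(Atilde) be the cone in R^{n+1} generated by tilde{a}_0,...,tilde{a}_m. Then the semigroup N·Atilde = sum_{i=0}^m N tilde{a}_i is normal, i.e., Z^{n+1} ∩ C(Atilde) = N·Atilde. -/
/-!
An integer point `(K, y)` of `C(Ã)` has `y ∈ K • conv(0, a_1, …, a_m)`. Since `P(Σ)` is convex it
contains this hull, so `y ∈ K • conv(0, a_i : i ∈ σ)` for one maximal cone `σ`, i.e.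
`y = ∑_{i ∈ σ} w_i a_i` with `w ≥ 0` and `∑ w_i ≤ K`. By smoothness the `a_i`, `i ∈ σ`, form a
`ℤ`-basis of `ℤ^n`, hence also an `ℝ`-basis of `ℝ^n`, so the `w_i` are integers and
`(K, y) = (K - ∑ w_i) ã_0 + ∑ w_i ã_i`.
-/

/-- The extended vectors `ã_0 = (1,0)`, `ã_i = (1, a_i)` in `ℤ^{n+1}`. -/
def atilde {n m : ℕ} (a : Fin m → Fin n → ℤ) : Option (Fin m) → Fin (n + 1) → ℤ :=
  fun o => Fin.cons 1 (fun j => Option.elim o 0 (fun i => a i j))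

open Finset
open scoped Pointwise

section TruncCone

variable {ι E : Type*} [AddCommGroup E] [Module ℝ E]

/-- `K • conv(0, v_i : i ∈ s)` for `K ≥ 0`; with `s = univ`, the slice at height `K` of the cone
spanned by `(1, 0)` and the `(1, v_i)`. -/
def truncCone (v : ι → E) (s : Finset ι) (K : ℝ) : Set E :=
  {y | ∃ w : ι → ℝ, (∀ i, 0 ≤ w i) ∧ ∑ i ∈ s, w i ≤ K ∧ y = ∑ i ∈ s, w i • v i}

theorem truncCone_eq_smul (v : ι → E) (s : Finset ι) {K : ℝ} (hK : 0 ≤ K) :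
    truncCone v s K = K • truncCone v s 1 := by
  ext y
  constructor
  · rintro ⟨w, hw, hle, rfl⟩
    rcases hK.eq_or_lt with rfl | hK
    · have hw0 : ∀ i ∈ s, w i = 0 := (sum_eq_zero_iff_of_nonneg fun i _ => hw i).1
        (le_antisymm hle (sum_nonneg fun i _ => hw i))
      refine ⟨0, ⟨0, fun _ => le_rfl, by simp, by simp⟩, ?_⟩
      rw [sum_eq_zero fun i hi => by rw [hw0 i hi, zero_smul]]
      exact smul_zero 0
    · refine ⟨∑ i ∈ s, (K⁻¹ * w i) • v i,
        ⟨fun i => K⁻¹ * w i, fun i => by have := hw i; positivity, ?_, rfl⟩, ?_⟩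
      · rw [← mul_sum]
        exact inv_mul_le_one_of_le₀ hle hK.le
      · simp [smul_sum, smul_smul, hK.ne']
  · rintro ⟨_, ⟨w, hw, hle, rfl⟩, rfl⟩
    refine ⟨fun i => K * w i, fun i => mul_nonneg hK (hw i), ?_, ?_⟩
    · simpa [← mul_sum] using mul_le_mul_of_nonneg_left hle hK
    · simp [smul_sum, smul_smul]

theorem convex_truncCone (v : ι → E) (s : Finset ι) (K : ℝ) : Convex ℝ (truncCone v s K) := by
  rintro _ ⟨w₁, hw₁, hle₁, rfl⟩ _ ⟨w₂, hw₂, hle₂, rfl⟩ α β hα hβ hαβ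
  refine ⟨fun i => α * w₁ i + β * w₂ i, fun i => by have := hw₁ i; have := hw₂ i; positivity,
    ?_, ?_⟩
  · calc ∑ i ∈ s, (α * w₁ i + β * w₂ i) = α * ∑ i ∈ s, w₁ i + β * ∑ i ∈ s, w₂ i := by
          rw [sum_add_distrib, mul_sum, mul_sum]
      _ ≤ α * K + β * K := by gcongr
      _ = K := by rw [← add_mul, hαβ, one_mul]
  · simp only [smul_sum, smul_smul, add_smul, sum_add_distrib]

theorem convexHull_insert_zero_image_eq_truncCone (v : ι → E) (s : Finset ι) :
    convexHull ℝ (insert 0 (v '' s)) = truncCone v s 1 := by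
  classical
  apply (convexHull_min _ (convex_truncCone v s 1)).antisymm
  · rintro _ ⟨w, hw, hle, rfl⟩
    have hmem := (convex_convexHull ℝ (insert 0 (v '' s))).sum_mem
      (t := insertNone s) (w := fun o => Option.elim o (1 - ∑ i ∈ s, w i) w)
      (z := fun o => Option.elim o 0 v) ?_ ?_ ?_
    · simpa [sum_insertNone] using hmem
    · rintro (_ | i) _
      · simpa using hle
      · exact hw i
    · simp [sum_insertNone]
    · rintro (_ | i) hi
      · exact subset_convexHull ℝ _ (Set.mem_insert _ _)
      · exact subset_convexHull ℝ _ (Set.mem_insert_of_mem _ ⟨i, by simpa using hi, rfl⟩)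
  · rintro _ (rfl | ⟨i, hi, rfl⟩)
    · exact ⟨0, fun _ => le_rfl, by simp, by simp⟩
    · refine ⟨Pi.single i 1, fun j => ?_, ?_, ?_⟩
      · by_cases h : j = i <;> simp [h]
      · simp [Finset.sum_pi_single', Finset.mem_coe.1 hi]
      · simp [Pi.single_apply, ite_smul, Finset.mem_coe.1 hi]

end TruncCone

theorem truncCone_univ_subset_biUnion {ι E : Type*} [Fintype ι] [AddCommGroup E] [Module ℝ E]
    (v : ι → E) (𝒮 : Finset (Finset ι)) (h𝒮 : 𝒮.Nonempty) (hray : ∀ i, ∃ σ ∈ 𝒮, i ∈ σ)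
    (hconv : Convex ℝ (⋃ σ ∈ 𝒮, convexHull ℝ (insert 0 (v '' σ)))) {K : ℝ} (hK : 0 ≤ K) :
    truncCone v univ K ⊆ ⋃ σ ∈ 𝒮, truncCone v σ K := by
  have hgen : insert 0 (Set.range v) ⊆ ⋃ σ ∈ 𝒮, convexHull ℝ (insert 0 (v '' σ)) := by
    rintro _ (rfl | ⟨i, rfl⟩)
    · obtain ⟨σ, hσ⟩ := h𝒮
      exact Set.mem_biUnion hσ (subset_convexHull ℝ _ (Set.mem_insert _ _))
    · obtain ⟨σ, hσ, hi⟩ := hray i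
      exact Set.mem_biUnion hσ (subset_convexHull ℝ _ (Set.mem_insert_of_mem _ ⟨i, hi, rfl⟩))
  intro y hy
  rw [truncCone_eq_smul v _ hK, ← convexHull_insert_zero_image_eq_truncCone, coe_univ,
    Set.image_univ] at hy
  obtain ⟨p, hp, rfl⟩ := hy
  obtain ⟨σ, hσ, hpσ⟩ := Set.mem_iUnion₂.1 (convexHull_min hgen hconv hp)
  refine Set.mem_biUnion hσ ?_
  rw [truncCone_eq_smul v σ hK, ← convexHull_insert_zero_image_eq_truncCone]
  exact Set.smul_mem_smul_set hpσ

theorem span_intCast_eq_top {n : ℕ} {S : Set (Fin n → ℤ)} (h : Submodule.span ℤ S = ⊤) :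
    Submodule.span ℝ ((fun u k => (u k : ℝ)) '' S) = ⊤ := by
  let f : (Fin n → ℤ) →ₗ[ℤ] (Fin n → ℝ) := (Int.castAddHom ℝ).toIntLinearMap.compLeft (Fin n)
  rw [eq_top_iff, ← (Pi.basisFun ℝ (Fin n)).span_eq, Submodule.span_le]
  rintro _ ⟨j, rfl⟩
  have : Pi.single j 1 ∈ Submodule.span ℤ ((fun u k => (u k : ℝ)) '' S) := by
    change _ ∈ Submodule.span ℤ (f '' S)
    rw [Submodule.span_image, h]
    exact ⟨Pi.single j 1, trivial, by ext; simp [f, Pi.single_apply]⟩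
  rw [Pi.basisFun_apply]
  exact Submodule.span_le_restrictScalars ℤ ℝ _ this

theorem exists_int_coeffs_of_span_eq_top {ι : Type*} {n : ℕ} (v : ι → Fin n → ℤ) (s : Finset ι)
    (hspan : Submodule.span ℤ (v '' s) = ⊤) (hcard : s.card = n) (y : Fin n → ℤ) (r : ι → ℝ)
    (hy : (fun k => (y k : ℝ)) = ∑ i ∈ s, r i • fun k => (v i k : ℝ)) :
    ∃ e : ι → ℤ, ∀ i ∈ s, r i = e i := by
  obtain ⟨e, he⟩ := Submodule.mem_span_image_finset_iff_exists_fun' ℤ |>.1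
    (hspan ▸ Submodule.mem_top : y ∈ Submodule.span ℤ (v '' s))
  have hrange : Set.range (fun i : s => fun k => (v i k : ℝ)) =
      (fun u k => (u k : ℝ)) '' (v '' s) := by
    ext; simp
  have hli : LinearIndependent ℝ (fun i : s => fun k => (v i k : ℝ)) :=
    linearIndependent_of_top_le_span_of_card_eq_finrank
      (by rw [hrange, span_intCast_eq_top hspan]) (by simp [hcard])
  have hzero : ∑ i : s, (r i - e i) • (fun k => (v i k : ℝ)) = 0 := by
    rw [Finset.sum_coe_sort s fun i => (r i - e i) • fun k => (v i k : ℝ)]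
    simp only [sub_smul, sum_sub_distrib, ← hy, ← he]
    ext k
    simp [Finset.sum_apply]
  exact ⟨e, fun i hi => sub_eq_zero.1 (Fintype.linearIndependent_iff.1 hli _ hzero ⟨i, hi⟩)⟩

theorem exists_nat_coeffs_of_mem_truncCone {n m : ℕ} (a : Fin m → Fin n → ℤ)
    (𝒮 : Finset (Finset (Fin m))) (hcard : ∀ σ ∈ 𝒮, σ.card = n) (h𝒮 : 𝒮.Nonempty)
    (hray : ∀ i, ∃ σ ∈ 𝒮, i ∈ σ) (hspan : ∀ σ ∈ 𝒮, Submodule.span ℤ (a '' σ) = ⊤)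
    (hconv : Convex ℝ (⋃ σ ∈ 𝒮,
      convexHull ℝ (insert (0 : Fin n → ℝ) ((fun i k => (a i k : ℝ)) '' σ))))
    {K : ℤ} (hK : 0 ≤ K) (y : Fin n → ℤ)
    (hy : (fun k => (y k : ℝ)) ∈ truncCone (fun i k => (a i k : ℝ)) univ K) :
    ∃ e : Fin m → ℕ, ∑ i, (e i : ℤ) ≤ K ∧ y = ∑ i, (e i : ℤ) • a i := by
  obtain ⟨σ, hσ, w, hw, hle, hyw⟩ := Set.mem_iUnion₂.1
    (truncCone_univ_subset_biUnion _ 𝒮 h𝒮 hray hconv (Int.cast_nonneg hK) hy)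
  obtain ⟨e, he⟩ := exists_int_coeffs_of_span_eq_top a σ (hspan σ hσ) (hcard σ hσ) y w hyw
  set e' : Fin m → ℕ := fun i => if i ∈ σ then (e i).toNat else 0
  have hwe : ∀ i ∈ σ, w i = e' i := fun i hi => by
    have : 0 ≤ e i := Int.cast_nonneg_iff.1 (he i hi ▸ hw i)
    simp only [e', if_pos hi, he i hi]
    exact_mod_cast (Int.toNat_of_nonneg this).symm
  have hzero : ∀ i ∉ σ, e' i = 0 := fun i hi => if_neg hi
  refine ⟨e', ?_, ?_⟩
  · rw [← sum_subset (subset_univ σ) fun i _ hi => by simp [hzero i hi]]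
    have : ∑ i ∈ σ, (e' i : ℝ) ≤ K := by rwa [← sum_congr rfl hwe]
    exact_mod_cast this
  · rw [← sum_subset (subset_univ σ) fun i _ hi => by simp [hzero i hi]]
    ext k
    have hyk := congrFun hyw k
    simp only [Finset.sum_apply, Pi.smul_apply, smul_eq_mul] at hyk ⊢
    rw [sum_congr rfl fun i hi => by rw [hwe i hi]] at hyk
    exact_mod_cast hyk

theorem sum_smul_atilde {R : Type*} [Ring R] {n m : ℕ} (a : Fin m → Fin n → ℤ)
    (c : Option (Fin m) → R) :
    ∑ o, c o • (fun k => (atilde a o k : R)) =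
      Fin.cons (∑ o, c o) (∑ i, c (some i) • fun k => (a i k : R)) := by
  ext k
  refine Fin.cases ?_ (fun j => ?_) k <;> simp [Finset.sum_apply, atilde, Fintype.sum_option]

theorem sum_smul_atilde_int {n m : ℕ} (a : Fin m → Fin n → ℤ) (c : Option (Fin m) → ℤ) :
    ∑ o, c o • atilde a o = Fin.cons (∑ o, c o) (∑ i, c (some i) • a i) := by
  simpa using sum_smul_atilde a c

/-- For a complete smooth fan with `P(Σ)` convex (weak Fano condition), the semigroup
`ℕ·Ã` generated by the extended vectors is normal: an integer vector lies in the real cone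
`C(Ã)` if and only if it is an `ℕ`-combination of the `ã_i`. -/
theorem stmt3 (n m : ℕ) (a : Fin m → Fin n → ℤ)
    (𝒮 : Finset (Finset (Fin m)))
    (hcard : ∀ σ ∈ 𝒮, σ.card = n)
    (hray : ∀ i : Fin m, ∃ σ ∈ 𝒮, i ∈ σ)
    (hcomplete : ∀ x : Fin n → ℝ, ∃ σ ∈ 𝒮, ∃ c : Fin m → ℝ,
      (∀ i, 0 ≤ c i) ∧ (∀ i, i ∉ σ → c i = 0) ∧
        x = ∑ i, c i • (fun k => ((a i k : ℝ))))
    (hsmooth : ∀ σ ∈ 𝒮,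
      LinearIndependent ℤ (fun i : {i // i ∈ σ} => a i.1) ∧
        Submodule.span ℤ (a '' ↑σ) = ⊤)
    (hconv : Convex ℝ (⋃ σ ∈ 𝒮,
      convexHull ℝ (insert (0 : Fin n → ℝ) ((fun i => fun k => ((a i k : ℝ))) '' ↑σ)))) :
    ∀ x : Fin (n + 1) → ℤ,
      ((fun k => ((x k : ℝ))) ∈
        {y : Fin (n + 1) → ℝ | ∃ c : Option (Fin m) → ℝ, (∀ o, 0 ≤ c o) ∧
          y = ∑ o, c o • (fun k => ((atilde a o k : ℝ)))})
      ↔ ∃ c : Option (Fin m) → ℕ, x = ∑ o, (c o : ℤ) • atilde a o := by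
  intro x
  constructor
  · rintro ⟨c, hc, hx⟩
    rw [sum_smul_atilde] at hx
    have hx0 : (x 0 : ℝ) = ∑ o, c o := congrFun hx 0
    have hK : 0 ≤ x 0 := Int.cast_nonneg_iff.1 (hx0 ▸ sum_nonneg fun o _ => hc o)
    have hy : (fun k => (Fin.tail x k : ℝ)) ∈ truncCone (fun i k => (a i k : ℝ)) univ (x 0) :=
      ⟨fun i => c (some i), fun i => hc _, by rw [hx0, Fintype.sum_option]; linarith [hc none],
        funext fun k => congrFun hx k.succ⟩
    have h𝒮 : 𝒮.Nonempty := let ⟨σ, hσ, _⟩ := hcomplete 0; ⟨σ, hσ⟩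
    obtain ⟨e, hle, he⟩ := exists_nat_coeffs_of_mem_truncCone a 𝒮 hcard h𝒮 hray
      (fun σ hσ => (hsmooth σ hσ).2) hconv hK _ hy
    refine ⟨fun o => o.elim (x 0 - ∑ i, (e i : ℤ)).toNat e, ?_⟩
    rw [sum_smul_atilde_int, Fintype.sum_option]
    conv_lhs => rw [← Fin.cons_self_tail x]
    simp [Int.toNat_of_nonneg (sub_nonneg.2 hle), he]
  · rintro ⟨c, rfl⟩
    refine ⟨fun o => c o, fun o => Nat.cast_nonneg _, ?_⟩
    ext k
    simp [Finset.sum_apply]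
end

section
/- Let X be the toric variety of a complete smooth fan Sigma in R^n with primitive ray generators a_1,...,a_m. Then the C-algebra C[v_1,...,v_m]/( (sum_i a_{ki} v_i)_{k=1..n} + (v_{i_1}···v_{i_p} : {a_{i_1},...,a_{i_p}} a primitive collection) ) is a finite-dimensional local C-algebra supported at the origin; in particular its reduced spectrum is the single point 0 in C^m. -/
/-- The Stanley–Reisner presentation of the cohomology ring of the toric variety of the
fan with ray generators `a` and maximal cones `𝒮`: the ideal generated by the linear
relations `∑_i a_{ki} v_i` and the monomials `∏_{i ∈ τ} v_i` over all primitive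
collections `τ`. -/
noncomputable def srIdeal (n m : ℕ) (a : Fin m → Fin n → ℤ)
    (𝒮 : Finset (Finset (Fin m))) : Ideal (MvPolynomial (Fin m) ℂ) :=
  Ideal.span
    ({p : MvPolynomial (Fin m) ℂ | ∃ k : Fin n,
        p = ∑ i, MvPolynomial.C ((a i k : ℂ)) * MvPolynomial.X i} ∪
     {p : MvPolynomial (Fin m) ℂ | ∃ τ : Finset (Fin m),
        (¬ ∃ σ ∈ 𝒮, τ ⊆ σ) ∧ (∀ τ' ⊂ τ, ∃ σ ∈ 𝒮, τ' ⊆ σ) ∧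
        p = ∏ i ∈ τ, MvPolynomial.X i})

/-!
A common zero `w` of the ideal cannot be nonzero on a whole primitive collection, so its support
is a face and lies in some maximal cone `σ`. The linear relations then read `∑_{i ∈ σ} w_i a_i = 0`,
and the `n` vectors `a_i`, `i ∈ σ`, span `ℤⁿ`, hence form a basis of `ℂⁿ`; so `w = 0`.
By the Nullstellensatz the radical of the ideal is the maximal ideal of the origin. The quotient
is then a Noetherian ring with a single prime ideal: a local Artinian ring, finite-dimensional
over `ℂ` since it is of finite type.
-/

theorem Ideal.isMaximal_nilradical_quotient {R : Type*} [CommRing R] {I : Ideal R}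
    (h : I.radical.IsMaximal) : (nilradical (R ⧸ I)).IsMaximal := by
  have hmap : I.radical.map (Ideal.Quotient.mk I) = nilradical (R ⧸ I) := by
    rw [Ideal.map_radical_of_surjective Ideal.Quotient.mk_surjective (by simp),
      Ideal.map_quotient_self]
    rfl
  rw [← hmap]
  exact Ideal.IsMaximal.map_of_surjective_of_ker_le Ideal.Quotient.mk_surjective
    (by simpa using Ideal.le_radical)

theorem Module.finite_of_isMaximal_nilradical (K A : Type*) [Field K] [CommRing A] [Algebra K A]
    [Algebra.FiniteType K A] [(nilradical A).IsMaximal] : Module.Finite K A :=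
  have := Algebra.FiniteType.isNoetherianRing K A
  have := Ring.KrullDimLE.of_isMaximal_nilradical A
  have : IsArtinianRing A := isArtinianRing_iff_krullDimLE_zero.mpr ‹_›
  Module.finite_of_isArtinianRing K A

theorem linearIndependent_algebraMap_comp_of_span_eq_top {R K ι κ : Type*} [CommRing R] [Field K]
    [Algebra R K] [Fintype ι] [Fintype κ] [DecidableEq κ] (v : ι → κ → R)
    (hspan : Submodule.span R (Set.range v) = ⊤) (hcard : Fintype.card ι = Fintype.card κ) :
    LinearIndependent K (fun i => algebraMap R K ∘ v i) := by
  refine linearIndependent_of_top_le_span_of_card_eq_finrank ?_ (by simpa using hcard)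
  let f := (Algebra.linearMap R K).compLeft κ
  have hf : ∀ x, f x ∈ Submodule.span K (Set.range (f ∘ v)) := fun x => by
    have : f x ∈ (Submodule.span R (Set.range v)).map f :=
      Submodule.mem_map_of_mem (hspan ▸ Submodule.mem_top)
    rw [Submodule.map_span, ← Set.range_comp] at this
    exact Submodule.span_le_restrictScalars R K _ this
  rw [← (Pi.basisFun K κ).span_eq, Submodule.span_le]
  rintro _ ⟨k, rfl⟩
  have hk : f (Pi.single k 1) = Pi.basisFun K κ k := by
    funext j
    by_cases hj : j = k <;> simp [f, hj]
  exact hk ▸ hf (Pi.single k 1)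

open MvPolynomial

def IsPrimitiveCollection {α : Type*} (𝒮 : Finset (Finset α)) (τ : Finset α) : Prop :=
  (¬ ∃ σ ∈ 𝒮, τ ⊆ σ) ∧ ∀ τ' ⊂ τ, ∃ σ ∈ 𝒮, τ' ⊆ σ

theorem exists_isPrimitiveCollection_subset {α : Type*} {𝒮 : Finset (Finset α)} {s : Finset α}
    (hs : ¬ ∃ σ ∈ 𝒮, s ⊆ σ) : ∃ τ ⊆ s, IsPrimitiveCollection 𝒮 τ := by
  induction s using Finset.strongInduction with
  | H s ih =>
    by_cases hfaces : ∀ t ⊂ s, ∃ σ ∈ 𝒮, t ⊆ σ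
    · exact ⟨s, subset_rfl, hs, hfaces⟩
    · obtain ⟨t, hts, ht⟩ := not_forall₂.mp hfaces
      obtain ⟨τ, hτt, hτ⟩ := ih t hts ht
      exact ⟨τ, hτt.trans hts.subset, hτ⟩

section srIdeal

variable {n m : ℕ} (a : Fin m → Fin n → ℤ) (𝒮 : Finset (Finset (Fin m)))

theorem linearRelation_mem_srIdeal (k : Fin n) :
    ∑ i, C (a i k : ℂ) * X i ∈ srIdeal n m a 𝒮 :=
  Ideal.subset_span (Or.inl ⟨k, rfl⟩)

theorem IsPrimitiveCollection.prod_X_mem_srIdeal {τ : Finset (Fin m)}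
    (hτ : IsPrimitiveCollection 𝒮 τ) : ∏ i ∈ τ, X i ∈ srIdeal n m a 𝒮 :=
  Ideal.subset_span (Or.inr ⟨τ, hτ.1, hτ.2, rfl⟩)

variable {a 𝒮}

theorem exists_cone_of_eval_srIdeal_eq_zero {w : Fin m → ℂ}
    (hw : ∀ p ∈ srIdeal n m a 𝒮, eval w p = 0) : ∃ σ ∈ 𝒮, ∀ i ∉ σ, w i = 0 := by
  by_contra! h
  obtain ⟨τ, hτ, hprim⟩ := exists_isPrimitiveCollection_subset (𝒮 := 𝒮)
    (s := Finset.univ.filter (w · ≠ 0)) fun ⟨σ, hσ, hsσ⟩ => by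
      obtain ⟨i, hi, hwi⟩ := h σ hσ
      exact hi (hsσ (by simpa using hwi))
  have := hw _ (hprim.prod_X_mem_srIdeal a)
  simp only [map_prod, eval_X, Finset.prod_eq_zero_iff] at this
  obtain ⟨i, hi, hwi⟩ := this
  simpa [hwi] using hτ hi

theorem sum_smul_eq_zero_of_eval_srIdeal_eq_zero {w : Fin m → ℂ}
    (hw : ∀ p ∈ srIdeal n m a 𝒮, eval w p = 0) : ∑ i, w i • (algebraMap ℤ ℂ ∘ a i) = 0 := by
  funext k
  simpa [mul_comm] using hw _ (linearRelation_mem_srIdeal a 𝒮 k)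

theorem eq_zero_of_eval_srIdeal_eq_zero (hcard : ∀ σ ∈ 𝒮, σ.card = n)
    (hspan : ∀ σ ∈ 𝒮, Submodule.span ℤ (a '' ↑σ) = ⊤) {w : Fin m → ℂ}
    (hw : ∀ p ∈ srIdeal n m a 𝒮, eval w p = 0) : w = 0 := by
  obtain ⟨σ, hσ, hwσ⟩ := exists_cone_of_eval_srIdeal_eq_zero hw
  have hind : LinearIndependent ℂ (fun i : σ => algebraMap ℤ ℂ ∘ a i) :=
    linearIndependent_algebraMap_comp_of_span_eq_top _
      (by rw [← hspan σ hσ, Set.image_eq_range]; rfl) (by simp [hcard σ hσ])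
  have hrel : ∑ i : σ, w i • (algebraMap ℤ ℂ ∘ a i) = 0 := by
    rw [Finset.sum_coe_sort σ (fun i => w i • (algebraMap ℤ ℂ ∘ a i)),
      Finset.sum_subset σ.subset_univ fun i _ hi => by simp [hwσ i hi]]
    exact sum_smul_eq_zero_of_eval_srIdeal_eq_zero hw
  funext i
  by_cases hi : i ∈ σ
  · exact Fintype.linearIndependent_iff.mp hind _ hrel ⟨i, hi⟩
  · exact hwσ i hi

theorem srIdeal_le_vanishingIdeal_zero (h𝒮 : 𝒮.Nonempty) :
    srIdeal n m a 𝒮 ≤ vanishingIdeal ℂ {(0 : Fin m → ℂ)} := by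
  obtain ⟨σ, hσ⟩ := h𝒮
  rw [srIdeal, Ideal.span_le]
  rintro _ (⟨k, rfl⟩ | ⟨τ, hτ, -, rfl⟩)
  · simp
  · obtain ⟨i, hi⟩ : τ.Nonempty :=
      Finset.nonempty_iff_ne_empty.mpr fun h => hτ ⟨σ, hσ, h ▸ σ.empty_subset⟩
    simp [Finset.prod_eq_zero hi]

theorem radical_srIdeal (h𝒮 : 𝒮.Nonempty) (hcard : ∀ σ ∈ 𝒮, σ.card = n)
    (hspan : ∀ σ ∈ 𝒮, Submodule.span ℤ (a '' ↑σ) = ⊤) :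
    (srIdeal n m a 𝒮).radical = vanishingIdeal ℂ {(0 : Fin m → ℂ)} := by
  rw [← vanishingIdeal_zeroLocus_eq_radical (K := ℂ)]
  congr
  ext w
  simp only [mem_zeroLocus_iff, Set.mem_singleton_iff]
  refine ⟨eq_zero_of_eval_srIdeal_eq_zero hcard hspan, ?_⟩
  rintro rfl p hp
  exact (mem_vanishingIdeal_singleton_iff _ _).mp (srIdeal_le_vanishingIdeal_zero h𝒮 hp)

end srIdeal

theorem stmt8_general (n m : ℕ) (a : Fin m → Fin n → ℤ)
    (𝒮 : Finset (Finset (Fin m)))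
    (hcard : ∀ σ ∈ 𝒮, σ.card = n)
    (hcomplete : ∀ x : Fin n → ℝ, ∃ σ ∈ 𝒮, ∃ c : Fin m → ℝ,
      (∀ i, 0 ≤ c i) ∧ (∀ i, i ∉ σ → c i = 0) ∧
        x = ∑ i, c i • (fun k => ((a i k : ℝ))))
    (hsmooth : ∀ σ ∈ 𝒮,
      LinearIndependent ℤ (fun i : {i // i ∈ σ} => a i.1) ∧
        Submodule.span ℤ (a '' ↑σ) = ⊤) :
    FiniteDimensional ℂ (MvPolynomial (Fin m) ℂ ⧸ srIdeal n m a 𝒮) ∧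
    IsLocalRing (MvPolynomial (Fin m) ℂ ⧸ srIdeal n m a 𝒮) ∧
    ∀ w : Fin m → ℂ, (∀ p ∈ srIdeal n m a 𝒮, MvPolynomial.eval w p = 0) → w = 0 := by
  have hspan σ hσ := (hsmooth σ hσ).2
  obtain ⟨σ, hσ, -⟩ := hcomplete 0
  have hrad := radical_srIdeal ⟨σ, hσ⟩ hcard hspan
  have : (nilradical (MvPolynomial (Fin m) ℂ ⧸ srIdeal n m a 𝒮)).IsMaximal :=
    Ideal.isMaximal_nilradical_quotient (hrad ▸ inferInstance)
  exact ⟨Module.finite_of_isMaximal_nilradical ℂ _, IsLocalRing.of_isMaximal_nilradical _,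
    fun w => eq_zero_of_eval_srIdeal_eq_zero hcard hspan⟩

/-- For a complete smooth fan, the Stanley–Reisner algebra
`ℂ[v_1,...,v_m]/(linear relations + primitive collection monomials)` is a finite
dimensional local `ℂ`-algebra whose only common zero is the origin; in particular its
reduced spectrum is the single point `0 ∈ ℂ^m`. -/
theorem stmt8 (n m : ℕ) (a : Fin m → Fin n → ℤ)
    (𝒮 : Finset (Finset (Fin m)))
    (hcard : ∀ σ ∈ 𝒮, σ.card = n)
    (hray : ∀ i : Fin m, ∃ σ ∈ 𝒮, i ∈ σ)
    (hcomplete : ∀ x : Fin n → ℝ, ∃ σ ∈ 𝒮, ∃ c : Fin m → ℝ,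
      (∀ i, 0 ≤ c i) ∧ (∀ i, i ∉ σ → c i = 0) ∧
        x = ∑ i, c i • (fun k => ((a i k : ℝ))))
    (hsmooth : ∀ σ ∈ 𝒮,
      LinearIndependent ℤ (fun i : {i // i ∈ σ} => a i.1) ∧
        Submodule.span ℤ (a '' ↑σ) = ⊤) :
    FiniteDimensional ℂ (MvPolynomial (Fin m) ℂ ⧸ srIdeal n m a 𝒮) ∧
    IsLocalRing (MvPolynomial (Fin m) ℂ ⧸ srIdeal n m a 𝒮) ∧
    ∀ w : Fin m → ℂ, (∀ p ∈ srIdeal n m a 𝒮, MvPolynomial.eval w p = 0) → w = 0 :=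
  stmt8_general n m a 𝒮 hcard hcomplete hsmooth
end

section
/- Let l^0 in Z^m be a relation among the ray generators of a complete smooth fan Sigma such that l^0 is not in the Mori cone Eff. Then the Gamma-series coefficient q^{l^0} z^{-|l^0|} / prod_{i=1}^m Gamma(D_i + l^0_i + 1), computed in the cohomology ring H^*(X,C) (where D_i are the torus invariant divisor classes and 1/Gamma(D_i + l^0_i + 1) for l^0_i < 0 is divisible by D_i), vanishes in H^*(X,C). -/
/-! A relation `l⁰` that is nonnegative outside some cone `σ` is effective, so for a
non-effective `l⁰` the negative support `{i | l⁰ᵢ < 0}` lies in no cone. It therefore contains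
a minimal non-face, whence `∏_{l⁰ᵢ < 0} Dᵢ = 0` by the Stanley–Reisner relations. For `l⁰ᵢ < 0`
the constant term `1/Γ(l⁰ᵢ + 1)` vanishes, so `Dᵢ` divides the `i`-th factor, and the product
of all factors is divisible by `∏_{l⁰ᵢ < 0} Dᵢ = 0`. -/

/-- The `j`-th Taylor coefficient of the entire function `1/Γ` at the point `k+1`,
i.e. the coefficient of `D^j` in `1/Γ(D + k + 1)`. -/
noncomputable def invGammaCoef (k : ℤ) (j : ℕ) : ℂ :=
  iteratedDeriv j (fun s : ℂ => (Complex.Gamma s)⁻¹) ((k : ℂ) + 1) / (Nat.factorial j : ℂ)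

open MvPolynomial

def moriCone (n m : ℕ) (a : Fin m → Fin n → ℤ) (𝒮 : Finset (Finset (Fin m))) :
    Set (Fin m → ℝ) :=
  {x | ∃ (N : ℕ) (c : Fin N → ℝ) (v : Fin N → Fin m → ℤ),
    (∀ j, 0 ≤ c j) ∧ (∀ j, ∑ i, v j i • a i = 0) ∧
    (∀ j, ∃ σ ∈ 𝒮, ∀ i, i ∉ σ → 0 ≤ v j i) ∧
    x = ∑ j, c j • (fun i => ((v j i : ℝ)))}

theorem mem_moriCone_of_nonneg_outside {n m : ℕ} {a : Fin m → Fin n → ℤ}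
    {𝒮 : Finset (Finset (Fin m))} {l : Fin m → ℤ} (hrel : ∑ i, l i • a i = 0)
    {σ : Finset (Fin m)} (hσ : σ ∈ 𝒮) (hl : ∀ i, i ∉ σ → 0 ≤ l i) :
    (fun i => (l i : ℝ)) ∈ moriCone n m a 𝒮 :=
  ⟨1, fun _ => 1, fun _ => l, fun _ => zero_le_one, fun _ => hrel, fun _ => ⟨σ, hσ, hl⟩,
    by simp⟩

theorem prod_X_mem_srIdeal_of_not_subset {n m : ℕ} {a : Fin m → Fin n → ℤ}
    {𝒮 : Finset (Finset (Fin m))} {τ : Finset (Fin m)} (hτ : ¬∃ σ ∈ 𝒮, τ ⊆ σ) :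
    ∏ i ∈ τ, X i ∈ srIdeal n m a 𝒮 := by
  classical
  induction τ using Finset.strongInduction with
  | H τ ih =>
    by_cases hmin : ∀ τ' ⊂ τ, ∃ σ ∈ 𝒮, τ' ⊆ σ
    · exact Ideal.subset_span (Or.inr ⟨τ, hτ, hmin, rfl⟩)
    · push Not at hmin
      obtain ⟨τ', hτ'τ, hτ'⟩ := hmin
      rw [← Finset.prod_sdiff hτ'τ.subset]
      exact Ideal.mul_mem_left _ _ (ih τ' hτ'τ (by simpa using hτ'))

theorem invGammaCoef_zero_of_neg {k : ℤ} (hk : k < 0) : invGammaCoef k 0 = 0 := by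
  have hGamma : Complex.Gamma ((k : ℂ) + 1) = 0 := by
    obtain ⟨t, ht⟩ : ∃ t : ℕ, (t : ℤ) = -k - 1 := ⟨(-k - 1).toNat, by omega⟩
    rw [show (k : ℂ) + 1 = -(t : ℂ) by rw [← Int.cast_natCast, ht]; push_cast; ring]
    exact Complex.Gamma_neg_nat_eq_zero t
  simp [invGammaCoef, hGamma]

theorem dvd_sum_smul_pow_of_coeff_zero {R A : Type*} [CommSemiring R] [CommSemiring A]
    [Algebra R A] {c : ℕ → R} (hc : c 0 = 0) (x : A) (N : ℕ) :
    x ∣ ∑ j ∈ Finset.range N, c j • x ^ j := by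
  refine Finset.dvd_sum fun j _ => ?_
  rcases j with _ | j
  · simp [hc]
  · exact dvd_smul_of_dvd _ (dvd_pow_self x j.succ_ne_zero)

theorem stmt11_general (n m : ℕ) (a : Fin m → Fin n → ℤ)
    (𝒮 : Finset (Finset (Fin m)))
    (l0 : Fin m → ℤ) (hrel : ∑ i, l0 i • a i = 0)
    (hnoteff : (fun i => ((l0 i : ℝ))) ∉
      {x : Fin m → ℝ | ∃ (N : ℕ) (c : Fin N → ℝ) (v : Fin N → Fin m → ℤ),
        (∀ j, 0 ≤ c j) ∧ (∀ j, ∑ i, v j i • a i = 0) ∧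
        (∀ j, ∃ σ ∈ 𝒮, ∀ i, i ∉ σ → 0 ≤ v j i) ∧
        x = ∑ j, c j • (fun i => ((v j i : ℝ)))})
    (N : ℕ) :
    (∏ i : Fin m, ∑ j ∈ Finset.range N,
        invGammaCoef (l0 i) j •
          (Ideal.Quotient.mk (srIdeal n m a 𝒮) (MvPolynomial.X i)) ^ j) = 0 := by
  classical
  set D := fun i => Ideal.Quotient.mk (srIdeal n m a 𝒮) (X i : MvPolynomial (Fin m) ℂ)
  set τ := Finset.univ.filter fun i => l0 i < 0
  have hτ : ¬∃ σ ∈ 𝒮, τ ⊆ σ := fun ⟨σ, hσ, hτσ⟩ =>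
    hnoteff <| mem_moriCone_of_nonneg_outside hrel hσ fun i hi =>
      not_lt.1 fun hneg => hi (hτσ (by simpa [τ] using hneg))
  have hD : ∏ i ∈ τ, D i = 0 := by
    rw [← map_prod, Ideal.Quotient.eq_zero_iff_mem]
    exact prod_X_mem_srIdeal_of_not_subset hτ
  have hdvd : ∀ i ∈ τ, D i ∣ ∑ j ∈ Finset.range N, invGammaCoef (l0 i) j • D i ^ j :=
    fun i hi => dvd_sum_smul_pow_of_coeff_zero
      (invGammaCoef_zero_of_neg (Finset.mem_filter.1 hi).2) (D i) N
  have hprod_dvd : ∏ i ∈ τ, D i ∣ ∏ i, ∑ j ∈ Finset.range N, invGammaCoef (l0 i) j • D i ^ j :=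
    (Finset.prod_dvd_prod_of_dvd _ _ hdvd).trans
      (Finset.prod_dvd_prod_of_subset _ _ _ (Finset.subset_univ τ))
  rwa [hD, zero_dvd_iff] at hprod_dvd

/-- If the relation `l⁰` among the rays of a complete smooth fan is not effective
(does not lie in the Mori cone), then the Gamma-series coefficient
`∏_{i=1}^m 1/Γ(D_i + l⁰_i + 1)`, computed in `H^*(X,ℂ)` with `D_i` the torus invariant
divisor classes (which are nilpotent), vanishes. -/
theorem stmt11 (n m : ℕ) (a : Fin m → Fin n → ℤ)
    (𝒮 : Finset (Finset (Fin m)))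
    (hcard : ∀ σ ∈ 𝒮, σ.card = n)
    (hray : ∀ i : Fin m, ∃ σ ∈ 𝒮, i ∈ σ)
    (hcomplete : ∀ x : Fin n → ℝ, ∃ σ ∈ 𝒮, ∃ c : Fin m → ℝ,
      (∀ i, 0 ≤ c i) ∧ (∀ i, i ∉ σ → c i = 0) ∧
        x = ∑ i, c i • (fun k => ((a i k : ℝ))))
    (hsmooth : ∀ σ ∈ 𝒮,
      LinearIndependent ℤ (fun i : {i // i ∈ σ} => a i.1) ∧
        Submodule.span ℤ (a '' ↑σ) = ⊤)
    (l0 : Fin m → ℤ) (hrel : ∑ i, l0 i • a i = 0)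
    (hnoteff : (fun i => ((l0 i : ℝ))) ∉
      {x : Fin m → ℝ | ∃ (N : ℕ) (c : Fin N → ℝ) (v : Fin N → Fin m → ℤ),
        (∀ j, 0 ≤ c j) ∧ (∀ j, ∑ i, v j i • a i = 0) ∧
        (∀ j, ∃ σ ∈ 𝒮, ∀ i, i ∉ σ → 0 ≤ v j i) ∧
        x = ∑ j, c j • (fun i => ((v j i : ℝ)))})
    (N : ℕ)
    (hN : ∀ i : Fin m,
      (Ideal.Quotient.mk (srIdeal n m a 𝒮) (MvPolynomial.X i)) ^ N = 0) :
    (∏ i : Fin m, ∑ j ∈ Finset.range N,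
        invGammaCoef (l0 i) j •
          (Ideal.Quotient.mk (srIdeal n m a 𝒮) (MvPolynomial.X i)) ^ j) = 0 :=
  stmt11_general n m a 𝒮 l0 hrel hnoteff N
end

section
/- Let H = H^*(X,C) for X a smooth projective variety of dimension n satisfying Hard Lefschetz with respect to L = c_1(X)∪. Suppose P : H × H -> C[z^{±}] is a bilinear pairing satisfying P(w,w') = c(w,w') z^{k+l} for homogeneous w in H^{2k}, w' in H^{2l} with constants c(w,w'), the flatness relation z∂_z P(w,w') = P(∇w, w') + P(w, ∇w') with z∇(w) = (deg/2)·z·w − c_1(X)∪w for homogeneous w, and that P takes values in z^n·C on all of H ⊗ H. Then c(w,w') = 0 whenever k + l > n; i.e., P is concentrated in z^n·C exactly on complementary-degree pairs. -/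
/-!
Flatness of `P` on a pair of homogeneous classes, whose pairing is a monomial `c z^{k+l}`, makes
the Euler term `z ∂_z` cancel the grading term, leaving `P(Lw, w') = -P(w, Lw')`: `L` is
anti-self-adjoint. Given `k + l > n` with `k ≥ l`, Hard Lefschetz writes `w ∈ H^{2k}` as
`L^{2k-n} u` with `u ∈ H^{2(n-k)}`, so `P(w, w') = ±P(u, L^{2k-n} w')` is a pairing of degrees
`(n - k, l + 2k - n)`, again of total `k + l`, whose larger index `l + 2k - n` exceeds `k`.
Using the symmetry of `P` this repeats until the larger index exceeds `n`, where `H` vanishes.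
-/

open Polynomial

theorem Polynomial.X_mul_derivative_C_mul_X_pow {R : Type*} [CommSemiring R] (c : R) (d : ℕ) :
    X * derivative (C c * X ^ d) = (d : R) • (C c * X ^ d) := by
  cases d with
  | zero => simp
  | succ d =>
    rw [derivative_C_mul_X_pow, smul_eq_C_mul]
    simp only [map_mul, map_natCast, add_tsub_cancel_right, pow_succ]
    ring

section GradedLefschetz

variable {R M N : Type*} [CommRing R] [AddCommGroup M] [Module R M] [AddCommGroup N]
  [Module R N] {Hk : ℕ → Submodule R M} {L : Module.End R M}

theorem Module.End.pow_apply_mem_of_map_le (hL : ∀ k, (Hk k).map L ≤ Hk (k + 1)) (m : ℕ)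
    {k : ℕ} {x : M} (hx : x ∈ Hk k) : (L ^ m) x ∈ Hk (k + m) := by
  induction m with
  | zero => simpa using hx
  | succ m ih =>
    rw [pow_succ', Module.End.mul_apply, ← add_assoc]
    exact hL _ (Submodule.mem_map_of_mem ih)

variable {B : M →ₗ[R] M →ₗ[R] N}

theorem LinearMap.apply_pow_apply_left_of_antiadjoint (hL : ∀ k, (Hk k).map L ≤ Hk (k + 1))
    (hB : ∀ k l, ∀ x ∈ Hk k, ∀ y ∈ Hk l, B (L x) y = -B x (L y)) (m : ℕ) {k l : ℕ} {x y : M}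
    (hx : x ∈ Hk k) (hy : y ∈ Hk l) : B ((L ^ m) x) y = (-1 : R) ^ m • B x ((L ^ m) y) := by
  induction m generalizing k x with
  | zero => simp
  | succ m ih =>
    have hLx : L x ∈ Hk (k + 1) := hL k (Submodule.mem_map_of_mem hx)
    rw [pow_succ, Module.End.mul_apply, ih hLx,
      hB _ _ _ hx _ (Module.End.pow_apply_mem_of_map_le hL m hy), ← Module.End.mul_apply,
      ← pow_mul_comm', pow_succ (-1 : R), mul_smul, neg_one_smul]

variable {n : ℕ}

theorem LinearMap.apply_eq_zero_of_lefschetz_reflect (hL : ∀ k, (Hk k).map L ≤ Hk (k + 1))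
    (hsurj : ∀ j, 2 * j ≤ n → (Hk j).map (L ^ (n - 2 * j)) = Hk (n - j))
    (hB : ∀ k l, ∀ x ∈ Hk k, ∀ y ∈ Hk l, B (L x) y = -B x (L y)) {k l : ℕ} (hkn : k ≤ n)
    (hnk : n ≤ 2 * k) (hzero : ∀ u ∈ Hk (n - k), ∀ v ∈ Hk (l + (2 * k - n)), B u v = 0) :
    ∀ x ∈ Hk k, ∀ y ∈ Hk l, B x y = 0 := by
  intro x hx y hy
  have hmap := hsurj (n - k) (by omega)
  rw [show n - (n - k) = k by omega, show n - 2 * (n - k) = 2 * k - n by omega] at hmap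
  obtain ⟨u, hu, rfl⟩ := hmap ▸ hx
  rw [apply_pow_apply_left_of_antiadjoint hL hB _ hu hy,
    hzero u hu _ (Module.End.pow_apply_mem_of_map_le hL _ hy), smul_zero]

variable (htop : ∀ k, n < k → Hk k = ⊥) (hL : ∀ k, (Hk k).map L ≤ Hk (k + 1))
  (hsurj : ∀ j, 2 * j ≤ n → (Hk j).map (L ^ (n - 2 * j)) = Hk (n - j))
  (hB : ∀ k l, ∀ x ∈ Hk k, ∀ y ∈ Hk l, B (L x) y = -B x (L y))
  (hswap : ∀ x y, B y x = 0 → B x y = 0)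
include htop hL hsurj hB hswap

theorem LinearMap.apply_eq_zero_of_lt_add_of_le (k l : ℕ) (hlk : l ≤ k) (hkl : n < k + l) :
    ∀ x ∈ Hk k, ∀ y ∈ Hk l, B x y = 0 := by
  by_cases hk : n < k
  · intro x hx y _
    rw [htop k hk, Submodule.mem_bot] at hx
    simp [hx]
  refine apply_eq_zero_of_lefschetz_reflect hL hsurj hB (by omega) (by omega) fun u hu v hv ↦ ?_
  exact hswap u v <| apply_eq_zero_of_lt_add_of_le (l + (2 * k - n)) (n - k) (by omega)
    (by omega) v hv u hu
termination_by n + 1 - k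

theorem LinearMap.apply_eq_zero_of_lt_add (k l : ℕ) (hkl : n < k + l) :
    ∀ x ∈ Hk k, ∀ y ∈ Hk l, B x y = 0 := by
  intro x hx y hy
  rcases le_total l k with hlk | hkl'
  · exact apply_eq_zero_of_lt_add_of_le htop hL hsurj hB hswap k l hlk hkl x hx y hy
  · exact hswap x y <|
      apply_eq_zero_of_lt_add_of_le htop hL hsurj hB hswap l k hkl' (by omega) y hy x hx

end GradedLefschetz

theorem stmt13_general {H : Type} [AddCommGroup H] [Module ℂ H]
    (n : ℕ) (Hk : ℕ → Submodule ℂ H)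
    (htop : ∀ k, n < k → Hk k = ⊥)
    (L : Module.End ℂ H)
    (hL : ∀ k, Submodule.map L (Hk k) ≤ Hk (k + 1))
    (hHL : ∀ j : ℕ, 2 * j ≤ n →
      (∀ x ∈ Hk j, (L ^ (n - 2 * j)) x = 0 → x = 0) ∧
      Submodule.map (L ^ (n - 2 * j)) (Hk j) = Hk (n - j))
    (P : H →ₗ[ℂ] H →ₗ[ℂ] Polynomial ℂ)
    (hgr : ∀ k l : ℕ, ∀ w ∈ Hk k, ∀ w' ∈ Hk l,
      ∃ c : ℂ, P w w' = Polynomial.C c * Polynomial.X ^ (k + l))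
    (hsym : ∀ w w' : H, P w w' = (-1 : ℂ) ^ n • ((P w' w).comp (-Polynomial.X)))
    (hflat : ∀ k l : ℕ, ∀ w ∈ Hk k, ∀ w' ∈ Hk l,
      Polynomial.X * (Polynomial.X * Polynomial.derivative (P w w')) =
        ((k + l : ℕ) : ℂ) • (Polynomial.X * P w w') - P (L w) w' - P w (L w')) :
    ∀ k l : ℕ, n < k + l → ∀ w ∈ Hk k, ∀ w' ∈ Hk l, P w w' = 0 := by
  have hanti : ∀ k l, ∀ w ∈ Hk k, ∀ w' ∈ Hk l, P (L w) w' = -P w (L w') := by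
    intro k l w hw w' hw'
    have hf := hflat k l w hw w' hw'
    obtain ⟨c, hc⟩ := hgr k l w hw w' hw'
    rw [hc, X_mul_derivative_C_mul_X_pow, mul_smul_comm] at hf
    exact eq_neg_of_add_eq_zero_left (by linear_combination hf)
  have hswap : ∀ w w', P w' w = 0 → P w w' = 0 := fun w w' h ↦ by
    rw [hsym, h, zero_comp, smul_zero]
  exact LinearMap.apply_eq_zero_of_lt_add htop hL (fun j hj ↦ (hHL j hj).2) hanti hswap

/-- Let `H = ⊕_{k≤n} H^{2k}` be the (even) cohomology of a smooth projective variety of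
dimension `n` satisfying Hard Lefschetz with respect to `L = c_1(X)∪`.  Let
`P : H ⊗ H → ℂ[z]` be a bilinear, `(-1)^n`-symmetric pairing such that `P(w,w')` is a
constant multiple of `z^{k+l}` for `w ∈ H^{2k}`, `w' ∈ H^{2l}`, satisfying the flatness
relation `z·(z∂_z P(w,w')) = (k+l)·z·P(w,w') - P(Lw,w') - P(w,Lw')`
(coming from `z∇(w) = (deg/2)·z·w - c_1(X)∪w`), and taking values in `z^n·ℂ[z]`.
Then `P(w,w') = 0` whenever `k + l > n`. -/
theorem stmt13 {H : Type} [AddCommGroup H] [Module ℂ H] [FiniteDimensional ℂ H]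
    (n : ℕ) (Hk : ℕ → Submodule ℂ H)
    (hint : DirectSum.IsInternal Hk)
    (htop : ∀ k, n < k → Hk k = ⊥)
    (L : Module.End ℂ H)
    (hL : ∀ k, Submodule.map L (Hk k) ≤ Hk (k + 1))
    (hHL : ∀ j : ℕ, 2 * j ≤ n →
      (∀ x ∈ Hk j, (L ^ (n - 2 * j)) x = 0 → x = 0) ∧
      Submodule.map (L ^ (n - 2 * j)) (Hk j) = Hk (n - j))
    (P : H →ₗ[ℂ] H →ₗ[ℂ] Polynomial ℂ)
    (hgr : ∀ k l : ℕ, ∀ w ∈ Hk k, ∀ w' ∈ Hk l,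
      ∃ c : ℂ, P w w' = Polynomial.C c * Polynomial.X ^ (k + l))
    (hsym : ∀ w w' : H, P w w' = (-1 : ℂ) ^ n • ((P w' w).comp (-Polynomial.X)))
    (hflat : ∀ k l : ℕ, ∀ w ∈ Hk k, ∀ w' ∈ Hk l,
      Polynomial.X * (Polynomial.X * Polynomial.derivative (P w w')) =
        ((k + l : ℕ) : ℂ) • (Polynomial.X * P w w') - P (L w) w' - P w (L w'))
    (hvaln : ∀ w w' : H, ∀ j : ℕ, j < n → (P w w').coeff j = 0) :
    ∀ k l : ℕ, n < k + l → ∀ w ∈ Hk k, ∀ w' ∈ Hk l, P w w' = 0 :=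
  stmt13_general n Hk htop L hL hHL P hgr hsym hflat
end
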